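/- Let L be an abelian group and A an L-graded commutative ring. The homogeneous nilpotent radical of A (the ideal generated by all homogeneous nilpotent elements) equals the intersection of all L-prime ideals of A. -/
import Mathlib


variable {L A : Type*} [AddCommGroup L] [DecidableEq L] [CommRing A]

/-- An `L`-prime ideal of an `L`-graded ring: a proper homogeneous ideal `p` such that
for homogeneous elements `x`, `y` with `x * y ∈ p`, one of `x`, `y` lies in `p`. -/
def Ideal.IsLPrime (𝒜 : L → AddSubgroup A) [GradedRing 𝒜] (p : Ideal A) : Prop :=
  Ideal.IsHomogeneous 𝒜 p ∧ p ≠ ⊤ ∧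
    ∀ x y : A, (∃ m : L, x ∈ 𝒜 m) → (∃ n : L, y ∈ 𝒜 n) → x * y ∈ p → x ∈ p ∨ y ∈ p

/-- Every `L`-prime ideal contains every homogeneous nilpotent element. -/
lemma lPrime_mem_of_homog_nilpotent (𝒜 : L → AddSubgroup A) [GradedRing 𝒜] {p : Ideal A}
    (hp : Ideal.IsLPrime 𝒜 p) {a : A} (ha : ∃ m : L, a ∈ 𝒜 m) (hn : IsNilpotent a) :
    a ∈ p := by
  obtain ⟨i, hai⟩ := ha
  obtain ⟨n, hn⟩ := hn
  have key : ∀ k : ℕ, a ^ k ∈ p → a ∈ p := by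
    intro k
    induction k with
    | zero =>
      intro h
      simp only [pow_zero] at h
      exact absurd ((Ideal.eq_top_iff_one p).2 h) hp.2.1
    | succ k ih =>
      intro h
      rw [pow_succ] at h
      rcases hp.2.2 (a ^ k) a ⟨k • i, SetLike.pow_mem_graded k hai⟩ ⟨i, hai⟩ h with h' | h'
      · exact ih h'
      · exact h'
  exact key n (hn ▸ p.zero_mem)

/-- Key lemma: a homogeneous element not in the homogeneous nilradical avoids some
`L`-prime ideal. -/
lemma exists_lPrime_not_mem (𝒜 : L → AddSubgroup A) [GradedRing 𝒜] {b : A}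
    (hb : ∃ m : L, b ∈ 𝒜 m)
    (hbS : b ∉ Ideal.span {a : A | (∃ n : L, a ∈ 𝒜 n) ∧ IsNilpotent a}) :
    ∃ p : Ideal A, Ideal.IsLPrime 𝒜 p ∧ b ∉ p := by
  set S : Ideal A := Ideal.span {a : A | (∃ n : L, a ∈ 𝒜 n) ∧ IsNilpotent a} with hSdef
  have hSnil : S ≤ nilradical A := by
    rw [hSdef, Ideal.span_le]
    intro x hx
    exact hx.2
  have hSpow : ∀ n : ℕ, b ^ (n + 1) ∉ S := by
    intro n hmem
    obtain ⟨k, hk⟩ := hSnil hmem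
    exact hbS (Ideal.subset_span ⟨hb, ⟨(n + 1) * k, by rw [pow_mul]; exact hk⟩⟩)
  set 𝒮 : Set (Ideal A) :=
    {I : Ideal A | Ideal.IsHomogeneous 𝒜 I ∧ S ≤ I ∧ ∀ n : ℕ, b ^ (n + 1) ∉ I} with h𝒮
  have hS𝒮 : S ∈ 𝒮 := by
    refine ⟨Ideal.homogeneous_span 𝒜 _ (fun x hx => hx.1), le_refl _, hSpow⟩
  obtain ⟨m, hSm, hmax⟩ := zorn_le_nonempty₀ 𝒮 (fun c hc hchain y hy => by
    refine ⟨sSup c, ⟨?_, ?_, ?_⟩, fun z hz => le_sSup hz⟩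
    · intro i r hr
      obtain ⟨I, hIc, hrI⟩ := (Submodule.mem_sSup_of_directed ⟨y, hy⟩ hchain.directedOn).mp hr
      exact le_sSup hIc ((hc hIc).1 i hrI)
    · exact (hc hy).2.1.trans (le_sSup hy)
    · intro n hn
      obtain ⟨I, hIc, hnI⟩ := (Submodule.mem_sSup_of_directed ⟨y, hy⟩ hchain.directedOn).mp hn
      exact (hc hIc).2.2 n hnI) S hS𝒮
  have hm𝒮 : m ∈ 𝒮 := hmax.1
  have hbm : b ∉ m := by
    intro h
    exact hm𝒮.2.2 0 (by rwa [zero_add, pow_one])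
  refine ⟨m, ⟨hm𝒮.1, fun h => hbm (h ▸ Submodule.mem_top), ?_⟩, hbm⟩
  intro x y hx hy hxy
  by_contra hcon
  push_neg at hcon
  obtain ⟨hxm, hym⟩ := hcon
  have hJ : ∀ z : A, z ∉ m → (∃ i : L, z ∈ 𝒜 i) → ∃ n : ℕ, b ^ (n + 1) ∈ m ⊔ Ideal.span {z} := by
    intro z hz hzh
    by_contra h
    push_neg at h
    have hmem : m ⊔ Ideal.span {z} ∈ 𝒮 :=
      ⟨hm𝒮.1.sup (Ideal.homogeneous_span 𝒜 _ (by rintro w rfl; exact hzh)),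
        hm𝒮.2.1.trans le_sup_left, h⟩
    exact hz (hmax.2 hmem le_sup_left (Ideal.mem_sup_right (Ideal.mem_span_singleton_self z)))
  obtain ⟨n, hn⟩ := hJ x hxm hx
  obtain ⟨k, hk⟩ := hJ y hym hy
  rw [Submodule.mem_sup] at hn hk
  obtain ⟨u, hu, v, hv, huv⟩ := hn
  obtain ⟨u', hu', v', hv', hu'v'⟩ := hk
  obtain ⟨c, hc⟩ := Ideal.mem_span_singleton'.mp hv
  obtain ⟨c', hc'⟩ := Ideal.mem_span_singleton'.mp hv'
  have hmul : b ^ (n + 1) * b ^ (k + 1) ∈ m := by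
    rw [← huv, ← hu'v', ← hc, ← hc']
    have heq : (u + c * x) * (u' + c' * y) =
        u * (u' + c' * y) + (c * u') * x + (c * c') * (x * y) := by ring
    rw [heq]
    exact add_mem (add_mem (m.mul_mem_right _ hu) (m.mul_mem_right _ (m.mul_mem_left _ hu')))
      (m.mul_mem_left _ hxy)
  rw [← pow_add] at hmul
  exact hm𝒮.2.2 (n + k + 1)
    (by rw [show n + k + 1 + 1 = n + 1 + (k + 1) by ring]; exact hmul)

/-- The homogeneous nilpotent radical (the ideal generated by all homogeneous nilpotent
elements) of an `L`-graded commutative ring coincides with the intersection of all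
`L`-prime ideals. -/
theorem homogeneous_nilradical_eq_sInf_lPrime (𝒜 : L → AddSubgroup A) [GradedRing 𝒜] :
    Ideal.span {a : A | (∃ n : L, a ∈ 𝒜 n) ∧ IsNilpotent a} =
      sInf {p : Ideal A | Ideal.IsLPrime 𝒜 p} := by
  classical
  apply le_antisymm
  · rw [Ideal.span_le]
    intro a ha
    rw [SetLike.mem_coe, Submodule.mem_sInf]
    intro p hp
    exact lPrime_mem_of_homog_nilpotent 𝒜 hp ha.1 ha.2
  · intro a ha
    have hcomp : ∀ i : L, (DirectSum.decompose 𝒜 a i : A) ∈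
        Ideal.span {a : A | (∃ n : L, a ∈ 𝒜 n) ∧ IsNilpotent a} := by
      intro i
      by_contra h
      obtain ⟨p, hp, hbp⟩ := exists_lPrime_not_mem 𝒜 ⟨i, SetLike.coe_mem _⟩ h
      exact hbp (hp.1 i (Submodule.mem_sInf.mp ha p hp))
    rw [← DirectSum.sum_support_decompose 𝒜 a]
    exact Ideal.sum_mem _ (fun i _ => hcomp i)
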